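/- For every choice of linear coefficients (t,b), σ²_lin(θ^L, β^L) ≤ σ²_lin(t,b). In particular, taking t = b = 0, the estimator with the optimal linear adjustment is weakly more efficient than the unadjusted (fully saturated) estimator: σ²_lin(θ^L, β^L) ≤ σ²_lin(0,0). -/

import Mathlib

open MeasureTheory ProbabilityTheory Finset

noncomputable section

/-- Population data for a covariate-adaptive randomization (CAR) design:
potential outcomes `Y1, Y0`, potential treatment take-ups `D1, D0` (valued in `{0,1}`),
covariates `X`, stratum `S`, and target assignment probabilities `piS`. -/
structure CARPop (Ω : Type*) [MeasurableSpace Ω] (𝒮 : Type*) [MeasurableSpace 𝒮]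
    (d : ℕ) where
  P : Measure Ω
  Y1 : Ω → ℝ
  Y0 : Ω → ℝ
  D1 : Ω → ℝ
  D0 : Ω → ℝ
  X : Ω → Fin d → ℝ
  S : Ω → 𝒮
  piS : 𝒮 → ℝ

namespace CARPop

variable {Ω : Type*} [MeasurableSpace Ω] {𝒮 : Type*} [MeasurableSpace 𝒮] {d : ℕ}

/-- Potential treatment take-up `D(a)`, with `a : Bool` (`true` = assigned to treatment). -/
def Da (c : CARPop Ω 𝒮 d) (a : Bool) : Ω → ℝ := if a then c.D1 else c.D0

/-- `Y(D(a)) = Y(1)·D(a) + Y(0)·(1 − D(a))`. -/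
def Ya (c : CARPop Ω 𝒮 d) (a : Bool) : Ω → ℝ :=
  fun ω => c.Y1 ω * c.Da a ω + c.Y0 ω * (1 - c.Da a ω)

/-- `W = Y(D(1))`. -/
def W (c : CARPop Ω 𝒮 d) : Ω → ℝ := c.Ya true

/-- `Z = Y(D(0))`. -/
def Z (c : CARPop Ω 𝒮 d) : Ω → ℝ := c.Ya false

/-- The compliers event `{D(1) > D(0)}`. -/
def compliers (c : CARPop Ω 𝒮 d) : Set Ω := {ω | c.D0 ω < c.D1 ω}

/-- The LATE `τ = E[Y(1) − Y(0) | D(1) > D(0)]`. -/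
def tau (c : CARPop Ω 𝒮 d) : ℝ :=
  (∫ ω in c.compliers, (c.Y1 ω - c.Y0 ω) ∂c.P) / (c.P c.compliers).toReal

/-- The stratum event `{S = s}`. -/
def stratum (c : CARPop Ω 𝒮 d) (s : 𝒮) : Set Ω := {ω | c.S ω = s}

/-- Conditional expectation given `S = s`: `E[f | S = s]`. -/
def cEs (c : CARPop Ω 𝒮 d) (s : 𝒮) (f : Ω → ℝ) : ℝ :=
  (∫ ω in c.stratum s, f ω ∂c.P) / (c.P (c.stratum s)).toReal

/-- Conditional expectation given `S`, i.e. `E[f | S]` as the function `ω ↦ E[f | S = S ω]`. -/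
def cES (c : CARPop Ω 𝒮 d) (f : Ω → ℝ) : Ω → ℝ := fun ω => c.cEs (c.S ω) f

/-- Centering at the conditional mean given `S`:  `f − E[f | S]`. -/
def tilt (c : CARPop Ω 𝒮 d) (f : Ω → ℝ) : Ω → ℝ := fun ω => f ω - c.cES f ω

/-- A working model `m(a, s, x)` evaluated along `(S, X)`. -/
def wm (c : CARPop Ω 𝒮 d) (m : Bool → 𝒮 → (Fin d → ℝ) → ℝ) (a : Bool) : Ω → ℝ :=
  fun ω => m a (c.S ω) (c.X ω)

/-- Square-integrability bound for a working model: `E[(m(a,S,X))² | S = s] ≤ C < ∞`. -/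
def WMBound (c : CARPop Ω 𝒮 d) (m : Bool → 𝒮 → (Fin d → ℝ) → ℝ) : Prop :=
  (∀ a : Bool, Measurable (fun ω => m a (c.S ω) (c.X ω))) ∧
    ∃ C : ℝ, ∀ (a : Bool) (s : 𝒮), c.cEs s (fun ω => (m a (c.S ω) (c.X ω)) ^ 2) ≤ C

/-- Influence term `Ξ₁` of the adjusted LATE estimator with working models `mY, mD`. -/
def Xi1 (c : CARPop Ω 𝒮 d) (mY mD : Bool → 𝒮 → (Fin d → ℝ) → ℝ) : Ω → ℝ := fun ω =>
  ((1 - 1 / c.piS (c.S ω)) * c.tilt (c.wm mY true) ω - c.tilt (c.wm mY false) ω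
      + c.tilt c.W ω / c.piS (c.S ω))
    - c.tau * ((1 - 1 / c.piS (c.S ω)) * c.tilt (c.wm mD true) ω
        - c.tilt (c.wm mD false) ω + c.tilt (c.Da true) ω / c.piS (c.S ω))

/-- Influence term `Ξ₀` of the adjusted LATE estimator with working models `mY, mD`. -/
def Xi0 (c : CARPop Ω 𝒮 d) (mY mD : Bool → 𝒮 → (Fin d → ℝ) → ℝ) : Ω → ℝ := fun ω =>
  ((1 / (1 - c.piS (c.S ω)) - 1) * c.tilt (c.wm mY false) ω + c.tilt (c.wm mY true) ω
      - c.tilt c.Z ω / (1 - c.piS (c.S ω)))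
    - c.tau * ((1 / (1 - c.piS (c.S ω)) - 1) * c.tilt (c.wm mD false) ω
        + c.tilt (c.wm mD true) ω - c.tilt (c.Da false) ω / (1 - c.piS (c.S ω)))

/-- Influence term `Ξ₂` (between-strata variation). -/
def Xi2 (c : CARPop Ω 𝒮 d) : Ω → ℝ := fun ω =>
  (c.cES (fun ω' => c.W ω' - c.Z ω') ω - ∫ ω', (c.W ω' - c.Z ω') ∂c.P)
    - c.tau * (c.cES (fun ω' => c.Da true ω' - c.Da false ω') ω
        - ∫ ω', (c.Da true ω' - c.Da false ω') ∂c.P)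

/-- `σ₁² = E[π(S)·Ξ₁²]`. -/
def sigma1Sq (c : CARPop Ω 𝒮 d) (mY mD : Bool → 𝒮 → (Fin d → ℝ) → ℝ) : ℝ :=
  ∫ ω, c.piS (c.S ω) * (c.Xi1 mY mD ω) ^ 2 ∂c.P

/-- `σ₀² = E[(1 − π(S))·Ξ₀²]`. -/
def sigma0Sq (c : CARPop Ω 𝒮 d) (mY mD : Bool → 𝒮 → (Fin d → ℝ) → ℝ) : ℝ :=
  ∫ ω, (1 - c.piS (c.S ω)) * (c.Xi0 mY mD ω) ^ 2 ∂c.P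

/-- `σ₂² = E[Ξ₂²]`. -/
def sigma2Sq (c : CARPop Ω 𝒮 d) : ℝ := ∫ ω, (c.Xi2 ω) ^ 2 ∂c.P

/-- Asymptotic variance `σ² = (σ₁² + σ₀² + σ₂²)/P(D(1) > D(0))²` of the adjusted
LATE estimator with working models `mY, mD`. -/
def sigmaSq (c : CARPop Ω 𝒮 d) (mY mD : Bool → 𝒮 → (Fin d → ℝ) → ℝ) : ℝ :=
  (c.sigma1Sq mY mD + c.sigma0Sq mY mD + c.sigma2Sq) / (c.P c.compliers).toReal ^ 2

/-- The population-level assumptions of the CAR setup (Assumption 1 of the paper). -/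
structure PopAssumptions (c : CARPop Ω 𝒮 d) : Prop where
  prob : IsProbabilityMeasure c.P
  mY1 : Measurable c.Y1
  mY0 : Measurable c.Y0
  mD1 : Measurable c.D1
  mD0 : Measurable c.D0
  mX : Measurable c.X
  mS : Measurable c.S
  d1Bin : ∀ ω, c.D1 ω = 0 ∨ c.D1 ω = 1
  d0Bin : ∀ ω, c.D0 ω = 0 ∨ c.D0 ω = 1
  noDefiers : c.P {ω | c.D1 ω = 0 ∧ c.D0 ω = 1} = 0
  compliersPos : 0 < c.P c.compliers
  strataPos : ∀ s, 0 < c.P (c.stratum s)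
  piRange : ∃ cc : ℝ, 0 < cc ∧ cc < 1 / 2 ∧ ∀ s, cc < c.piS s ∧ c.piS s < 1 - cc
  momentY : ∃ q C : ℝ, 4 ≤ q ∧ ∀ s,
    c.cEs s (fun ω => |c.Y1 ω| ^ q) ≤ C ∧ c.cEs s (fun ω => |c.Y0 ω| ^ q) ≤ C
  intY1sq : Integrable (fun ω => c.Y1 ω ^ 2) c.P
  intY0sq : Integrable (fun ω => c.Y0 ω ^ 2) c.P

section Linear

variable {ι : Type*} [Fintype ι] [DecidableEq ι]

/-- Centered regressor `Ψ̃ₛ = Ψₛ(X) − E[Ψₛ(X) | S = s]`. -/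
def psiTilt (c : CARPop Ω 𝒮 d) (Ψ : 𝒮 → (Fin d → ℝ) → ι → ℝ) (s : 𝒮) : Ω → ι → ℝ :=
  fun ω j => Ψ s (c.X ω) j - c.cEs s (fun ω' => Ψ s (c.X ω') j)

/-- Within-stratum Gram matrix `E[Ψ̃ₛΨ̃ₛᵀ | S = s]`. -/
def gram (c : CARPop Ω 𝒮 d) (Ψ : 𝒮 → (Fin d → ℝ) → ι → ℝ) (s : 𝒮) : Matrix ι ι ℝ :=
  Matrix.of fun i j => c.cEs s (fun ω => c.psiTilt Ψ s ω i * c.psiTilt Ψ s ω j)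

/-- Optimal linear coefficient `θᴸ(a,s) = (E[Ψ̃Ψ̃ᵀ|S=s])⁻¹ E[Ψ̃·Y(D(a)) | S=s]`. -/
def thetaL (c : CARPop Ω 𝒮 d) (Ψ : 𝒮 → (Fin d → ℝ) → ι → ℝ) (a : Bool) (s : 𝒮) : ι → ℝ :=
  Matrix.mulVec (c.gram Ψ s)⁻¹ (fun j => c.cEs s (fun ω => c.psiTilt Ψ s ω j * c.Ya a ω))

/-- Optimal linear coefficient `βᴸ(a,s) = (E[Ψ̃Ψ̃ᵀ|S=s])⁻¹ E[Ψ̃·D(a) | S=s]`. -/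
def betaL (c : CARPop Ω 𝒮 d) (Ψ : 𝒮 → (Fin d → ℝ) → ι → ℝ) (a : Bool) (s : 𝒮) : ι → ℝ :=
  Matrix.mulVec (c.gram Ψ s)⁻¹ (fun j => c.cEs s (fun ω => c.psiTilt Ψ s ω j * c.Da a ω))

/-- Linear working model `x ↦ Ψₛ(x)ᵀ t(a,s)`. -/
def linWM (Ψ : 𝒮 → (Fin d → ℝ) → ι → ℝ) (t : Bool → 𝒮 → ι → ℝ) :
    Bool → 𝒮 → (Fin d → ℝ) → ℝ :=
  fun a s x => ∑ j, Ψ s x j * t a s j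

/-- Asymptotic variance of the LATE estimator with linear adjustments
`μ̄ʸ(a,s,x) = Ψₛ(x)ᵀ t(a,s)` and `μ̄ᴰ(a,s,x) = Ψₛ(x)ᵀ b(a,s)`. -/
def sigmaSqLin (c : CARPop Ω 𝒮 d) (Ψ : 𝒮 → (Fin d → ℝ) → ι → ℝ)
    (t b : Bool → 𝒮 → ι → ℝ) : ℝ :=
  c.sigmaSq (linWM Ψ t) (linWM Ψ b)

/-- Regularity of the regressor `Ψ`: measurability, a conditional moment bound of
order `q > 2`, and eigenvalues of the within-stratum Gram matrices of the centered
regressor bounded away from `0` and `∞`. -/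
def PsiRegular (c : CARPop Ω 𝒮 d) (Ψ : 𝒮 → (Fin d → ℝ) → ι → ℝ) : Prop :=
  (∀ s, Measurable (Ψ s)) ∧
  (∃ q C : ℝ, 2 < q ∧ ∀ s,
      c.cEs s (fun ω => (∑ j, (Ψ (c.S ω) (c.X ω) j) ^ 2) ^ (q / 2)) ≤ C) ∧
  (∃ c' C' : ℝ, 0 < c' ∧ c' ≤ C' ∧ ∀ s, ∀ v : ι → ℝ,
      c' * (∑ j, v j ^ 2) ≤ (∑ j, v j * Matrix.mulVec (c.gram Ψ s) v j) ∧
        (∑ j, v j * Matrix.mulVec (c.gram Ψ s) v j) ≤ C' * (∑ j, v j ^ 2))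

end Linear

end CARPop

/-!
Fix a stratum `s` and write `p = π(s)`. With linear working models, `Ξ₁` and `Ξ₀` depend on the
coefficients `(t, b)` only through the adjustment `g = Ψ̃ₛᵀ v` with `v = effCoef s t b`, and on
`{S = s}` the integrand `p Ξ₁² + (1 - p) Ξ₀²` equals `stratumLoss p A B g`, where `A` and `B` are
the centered outcomes `Y(D(a)) - τ D(a)` for `a = 1, 0`. Completing the square in `g` gives
`stratumLoss p A B g = p/(1-p) (R - g)² + stratumLoss p A B R` with `R = (1-p)/p A + B`, so
minimizing `σ²` over `(t, b)` is, stratum by stratum, the least-squares regression of `R` on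
`Ψ̃ₛ`. The coefficients `(θᴸ, βᴸ)` make `effCoef s θᴸ βᴸ` solve the normal equations
`E[Ψ̃ₛ (R - Ψ̃ₛᵀ v) | S = s] = 0`, while `σ₂²` does not depend on the adjustment.
-/

section LeastSquares

variable {α ι : Type*} [MeasurableSpace α] {ν : Measure α}

theorem integral_sq_le_integral_sub_sq_of_integral_mul_eq_zero {u h : α → ℝ}
    (hu : MemLp u 2 ν) (hh : MemLp h 2 ν) (horth : ∫ x, u x * h x ∂ν = 0) :
    ∫ x, u x ^ 2 ∂ν ≤ ∫ x, (u x - h x) ^ 2 ∂ν := by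
  have huh : Integrable (fun x => 2 * (u x * h x)) ν := (hu.integrable_mul hh).const_mul 2
  have hexp : (fun x => (u x - h x) ^ 2) = fun x => u x ^ 2 - 2 * (u x * h x) + h x ^ 2 := by
    funext x; ring
  rw [hexp, integral_add (f := fun x => u x ^ 2 - 2 * (u x * h x))
      (hu.integrable_sq.sub huh) hh.integrable_sq,
    integral_sub hu.integrable_sq huh, integral_const_mul, horth]
  linarith [integral_nonneg (μ := ν) (f := fun x => h x ^ 2) fun x => sq_nonneg (h x)]

theorem memLp_dotProduct [Fintype ι] {φ : α → ι → ℝ} (hφ : ∀ j, MemLp (fun x => φ x j) 2 ν)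
    (v : ι → ℝ) : MemLp (fun x => φ x ⬝ᵥ v) 2 ν :=
  memLp_finsetSum _ fun j _ => (hφ j).mul_const (v j)

theorem integral_sq_sub_dotProduct_le [Fintype ι] {φ : α → ι → ℝ} {R : α → ℝ} {v₀ : ι → ℝ}
    (hR : MemLp R 2 ν) (hφ : ∀ j, MemLp (fun x => φ x j) 2 ν)
    (hnormal : ∀ j, ∫ x, φ x j * (R x - φ x ⬝ᵥ v₀) ∂ν = 0) (v : ι → ℝ) :
    ∫ x, (R x - φ x ⬝ᵥ v₀) ^ 2 ∂ν ≤ ∫ x, (R x - φ x ⬝ᵥ v) ^ 2 ∂ν := by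
  have hres : MemLp (fun x => R x - φ x ⬝ᵥ v₀) 2 ν := hR.sub (memLp_dotProduct hφ v₀)
  have horth : ∫ x, (R x - φ x ⬝ᵥ v₀) * φ x ⬝ᵥ (v - v₀) ∂ν = 0 := by
    have hsum : ∀ x, (R x - φ x ⬝ᵥ v₀) * φ x ⬝ᵥ (v - v₀)
        = ∑ j, φ x j * (R x - φ x ⬝ᵥ v₀) * (v - v₀) j := fun x => by
      change _ * ∑ j, φ x j * (v - v₀) j = _
      rw [Finset.mul_sum]
      exact Finset.sum_congr rfl fun j _ => by ring
    simp_rw [hsum]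
    rw [integral_finsetSum (f := fun j x => φ x j * (R x - φ x ⬝ᵥ v₀) * (v - v₀) j) _
      fun j _ => ((hφ j).integrable_mul hres).mul_const _]
    exact Finset.sum_eq_zero fun j _ => by rw [integral_mul_const, hnormal j, zero_mul]
  convert integral_sq_le_integral_sub_sq_of_integral_mul_eq_zero hres
    (memLp_dotProduct hφ (v - v₀)) horth using 3 with x
  simp only [dotProduct_sub]
  ring

end LeastSquares

open Matrix

namespace CARPop

variable {Ω : Type*} [MeasurableSpace Ω] {𝒮 : Type*} [MeasurableSpace 𝒮] {d : ℕ}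
  (c : CARPop Ω 𝒮 d)

lemma measurableSet_stratum [MeasurableSingletonClass 𝒮] (hc : c.PopAssumptions) (s : 𝒮) :
    MeasurableSet (c.stratum s) :=
  hc.mS (measurableSet_singleton s)

lemma toReal_measure_stratum_pos (hc : c.PopAssumptions) (s : 𝒮) :
    0 < (c.P (c.stratum s)).toReal :=
  haveI := hc.prob
  ENNReal.toReal_pos (hc.strataPos s).ne' (measure_ne_top _ _)

lemma setIntegral_stratum_eq_mul_cEs (hc : c.PopAssumptions) (s : 𝒮) (f : Ω → ℝ) :
    ∫ ω in c.stratum s, f ω ∂c.P = (c.P (c.stratum s)).toReal * c.cEs s f := by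
  rw [cEs, mul_div_cancel₀ _ (c.toReal_measure_stratum_pos hc s).ne']

lemma cEs_congr [MeasurableSingletonClass 𝒮] (hc : c.PopAssumptions) {s : 𝒮} {f g : Ω → ℝ}
    (hfg : Set.EqOn f g (c.stratum s)) : c.cEs s f = c.cEs s g := by
  rw [cEs, cEs, setIntegral_congr_fun (c.measurableSet_stratum hc s) hfg]

lemma integral_eq_sum_setIntegral_stratum [Fintype 𝒮] [MeasurableSingletonClass 𝒮]
    (hc : c.PopAssumptions) {f : Ω → ℝ} {g : 𝒮 → Ω → ℝ}
    (hfg : ∀ s, Set.EqOn f (g s) (c.stratum s))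
    (hg : ∀ s, Integrable (g s) (c.P.restrict (c.stratum s))) :
    ∫ ω, f ω ∂c.P = ∑ s, ∫ ω in c.stratum s, g s ω ∂c.P := by
  have hcover : ⋃ s, c.stratum s = Set.univ := Set.iUnion_eq_univ_iff.2 fun ω => ⟨c.S ω, rfl⟩
  have hdisj : Pairwise (Function.onFun Disjoint c.stratum) := fun s s' hss' =>
    Set.disjoint_left.2 fun ω (hs : c.S ω = s) (hs' : c.S ω = s') => hss' (hs.symm.trans hs')
  rw [← setIntegral_univ, ← hcover, integral_iUnion_fintype (c.measurableSet_stratum hc) hdisj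
    fun s => (integrableOn_congr_fun (hfg s) (c.measurableSet_stratum hc s)).2 (hg s)]
  exact Finset.sum_congr rfl fun s _ =>
    setIntegral_congr_fun (c.measurableSet_stratum hc s) (hfg s)

lemma piS_pos (hc : c.PopAssumptions) (s : 𝒮) : 0 < c.piS s := by
  obtain ⟨cc, hcc, -, h⟩ := hc.piRange
  exact hcc.trans (h s).1

lemma piS_lt_one (hc : c.PopAssumptions) (s : 𝒮) : c.piS s < 1 := by
  obtain ⟨cc, hcc, -, h⟩ := hc.piRange
  linarith [(h s).2]

lemma Da_eq_zero_or_one (hc : c.PopAssumptions) (a : Bool) (ω : Ω) :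
    c.Da a ω = 0 ∨ c.Da a ω = 1 := by
  cases a
  exacts [hc.d0Bin ω, hc.d1Bin ω]

lemma measurable_Da (hc : c.PopAssumptions) (a : Bool) : Measurable (c.Da a) := by
  cases a
  exacts [hc.mD0, hc.mD1]

lemma memLp_Da (hc : c.PopAssumptions) (a : Bool) : MemLp (c.Da a) 2 c.P :=
  haveI := hc.prob
  MemLp.of_bound (c.measurable_Da hc a).aestronglyMeasurable 1 <| ae_of_all _ fun ω => by
    rcases c.Da_eq_zero_or_one hc a ω with h | h <;> simp [h]

lemma memLp_Ya (hc : c.PopAssumptions) (a : Bool) : MemLp (c.Ya a) 2 c.P := by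
  have hY1 := (memLp_two_iff_integrable_sq hc.mY1.aestronglyMeasurable).2 hc.intY1sq
  have hY0 := (memLp_two_iff_integrable_sq hc.mY0.aestronglyMeasurable).2 hc.intY0sq
  have hD := c.measurable_Da hc a
  have hmeas : Measurable (c.Ya a) :=
    (hc.mY1.mul hD).add (hc.mY0.mul (measurable_const.sub hD))
  refine (hY1.norm.add hY0.norm).of_le hmeas.aestronglyMeasurable (ae_of_all _ fun ω => ?_)
  rcases c.Da_eq_zero_or_one hc a ω with h | h <;>
    simp [Ya, h, abs_of_nonneg (add_nonneg (abs_nonneg (c.Y1 ω)) (abs_nonneg (c.Y0 ω)))]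

def ctrOutcome (s : 𝒮) (a : Bool) : Ω → ℝ := fun ω =>
  (c.Ya a ω - c.cEs s (c.Ya a)) - c.tau * (c.Da a ω - c.cEs s (c.Da a))

def target (s : 𝒮) : Ω → ℝ := fun ω =>
  (1 - c.piS s) / c.piS s * c.ctrOutcome s true ω + c.ctrOutcome s false ω

def effCoef {ι : Type*} (s : 𝒮) (t b : Bool → 𝒮 → ι → ℝ) : ι → ℝ :=
  ((1 - c.piS s) / c.piS s) • (t true s - c.tau • b true s) + (t false s - c.tau • b false s)

def stratumLoss (p A B g : ℝ) : ℝ :=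
  p * (A / p - g) ^ 2 + (1 - p) * (-B / (1 - p) + p / (1 - p) * g) ^ 2

lemma stratumLoss_eq {p : ℝ} (hp : p ≠ 0) (hp' : 1 - p ≠ 0) (A B g : ℝ) :
    stratumLoss p A B g
      = p / (1 - p) * ((1 - p) / p * A + B - g) ^ 2
        + stratumLoss p A B ((1 - p) / p * A + B) := by
  unfold stratumLoss
  field_simp
  ring

lemma memLp_ctrOutcome (hc : c.PopAssumptions) (s : 𝒮) (a : Bool) :
    MemLp (c.ctrOutcome s a) 2 (c.P.restrict (c.stratum s)) :=
  haveI := hc.prob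
  (((c.memLp_Ya hc a).restrict _).sub (memLp_const _)).sub
    ((((c.memLp_Da hc a).restrict _).sub (memLp_const _)).const_mul _)

lemma memLp_target (hc : c.PopAssumptions) (s : 𝒮) :
    MemLp (c.target s) 2 (c.P.restrict (c.stratum s)) :=
  ((c.memLp_ctrOutcome hc s true).const_mul _).add (c.memLp_ctrOutcome hc s false)

section LinearAdjustment

variable {ι : Type*} [Fintype ι] (Ψ : 𝒮 → (Fin d → ℝ) → ι → ℝ)

lemma gram_diag_pos (hΨ : c.PsiRegular Ψ) (s : 𝒮) (j : ι) : 0 < c.gram Ψ s j j := by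
  classical
  obtain ⟨c', _, hc', -, hev⟩ := hΨ.2.2
  have h := (hev s (Pi.single j 1)).1
  have hsq : ∑ i, (Pi.single j 1 : ι → ℝ) i ^ 2 = 1 := by simp [Pi.single_apply]
  have hquad : ∑ i, (Pi.single j 1 : ι → ℝ) i * (c.gram Ψ s *ᵥ Pi.single j 1) i
      = c.gram Ψ s j j := by
    simp [Matrix.mulVec_single, Pi.single_apply]
  rw [hsq, hquad, mul_one] at h
  exact hc'.trans_le h

lemma isUnit_det_gram [DecidableEq ι] (hΨ : c.PsiRegular Ψ) (s : 𝒮) :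
    IsUnit (c.gram Ψ s).det := by
  obtain ⟨c', _, hc', -, hev⟩ := hΨ.2.2
  refine isUnit_iff_ne_zero.2 fun hdet => ?_
  obtain ⟨v, hv, hker⟩ := Matrix.exists_mulVec_eq_zero_iff.2 hdet
  have h := (hev s v).1
  simp only [hker, Pi.zero_apply, mul_zero, Finset.sum_const_zero] at h
  have hnorm : 0 < ∑ j, v j ^ 2 := by
    obtain ⟨j, hj⟩ := Function.ne_iff.1 hv
    exact Finset.sum_pos' (fun i _ => sq_nonneg _) ⟨j, Finset.mem_univ j, pow_two_pos_of_ne_zero hj⟩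
  nlinarith

lemma gram_mulVec_inv_mulVec [DecidableEq ι] (hΨ : c.PsiRegular Ψ) (s : 𝒮) (x : ι → ℝ) :
    c.gram Ψ s *ᵥ ((c.gram Ψ s)⁻¹ *ᵥ x) = x := by
  rw [Matrix.mulVec_mulVec, Matrix.mul_nonsing_inv _ (c.isUnit_det_gram Ψ hΨ s),
    Matrix.one_mulVec]

-- A non-square-integrable coordinate would have `gram` diagonal entry `0` (junk integral),
-- contradicting the eigenvalue lower bound.
lemma memLp_psiTilt (hc : c.PopAssumptions) (hΨ : c.PsiRegular Ψ) (s : 𝒮) (j : ι) :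
    MemLp (fun ω => c.psiTilt Ψ s ω j) 2 (c.P.restrict (c.stratum s)) := by
  have hmeas : Measurable fun ω => c.psiTilt Ψ s ω j :=
    ((measurable_pi_apply j).comp ((hΨ.1 s).comp hc.mX)).sub measurable_const
  refine (memLp_two_iff_integrable_sq hmeas.aestronglyMeasurable).2 (by_contra fun hni => ?_)
  have hzero : c.gram Ψ s j j = 0 := by
    simp only [gram, Matrix.of_apply, cEs, ← pow_two, integral_undef hni, zero_div]
  exact (c.gram_diag_pos Ψ hΨ s j).ne' hzero

lemma integrable_Psi (hc : c.PopAssumptions) (hΨ : c.PsiRegular Ψ) (s : 𝒮) (j : ι) :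
    Integrable (fun ω => Ψ s (c.X ω) j) (c.P.restrict (c.stratum s)) := by
  have := hc.prob
  have hmean := integrable_const (μ := c.P.restrict (c.stratum s))
    (c.cEs s fun ω' => Ψ s (c.X ω') j)
  exact ((c.memLp_psiTilt Ψ hc hΨ s j).integrable one_le_two).add hmean
    |>.congr (ae_of_all _ fun ω => by simp [psiTilt])

lemma setIntegral_psiTilt (hc : c.PopAssumptions) (hΨ : c.PsiRegular Ψ) (s : 𝒮) (j : ι) :
    ∫ ω in c.stratum s, c.psiTilt Ψ s ω j ∂c.P = 0 := by
  have := hc.prob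
  simp only [psiTilt]
  rw [integral_sub (c.integrable_Psi Ψ hc hΨ s j) (integrable_const _), integral_const,
    measureReal_restrict_apply_univ, smul_eq_mul, c.setIntegral_stratum_eq_mul_cEs hc,
    measureReal_def, sub_self]

def crossMoment (s : 𝒮) (f : Ω → ℝ) : ι → ℝ :=
  fun j => c.cEs s (fun ω => c.psiTilt Ψ s ω j * f ω)

lemma tilt_wm_linWM_of_mem [MeasurableSingletonClass 𝒮] (hc : c.PopAssumptions)
    (hΨ : c.PsiRegular Ψ) {s : 𝒮} {ω : Ω} (hω : ω ∈ c.stratum s) (t : Bool → 𝒮 → ι → ℝ)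
    (a : Bool) : c.tilt (c.wm (linWM Ψ t) a) ω = c.psiTilt Ψ s ω ⬝ᵥ t a s := by
  have hs : c.S ω = s := hω
  have hmean : c.cEs s (c.wm (linWM Ψ t) a)
      = ∑ j, c.cEs s (fun ω' => Ψ s (c.X ω') j) * t a s j := by
    rw [c.cEs_congr hc (g := fun ω' => ∑ j, Ψ s (c.X ω') j * t a s j) fun ω' hω' => by
      simp only [wm, linWM, show c.S ω' = s from hω'], cEs,
      integral_finsetSum _ fun j _ => (c.integrable_Psi Ψ hc hΨ s j).mul_const _,
      Finset.sum_div]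
    exact Finset.sum_congr rfl fun j _ => by rw [integral_mul_const, mul_div_right_comm, cEs]
  simp only [tilt, cES, hs, hmean, wm, linWM, psiTilt, dotProduct, ← Finset.sum_sub_distrib,
    sub_mul]

lemma Xi1_linWM_of_mem [MeasurableSingletonClass 𝒮] (hc : c.PopAssumptions)
    (hΨ : c.PsiRegular Ψ) {s : 𝒮} {ω : Ω} (hω : ω ∈ c.stratum s) (t b : Bool → 𝒮 → ι → ℝ) :
    c.Xi1 (linWM Ψ t) (linWM Ψ b) ω
      = c.ctrOutcome s true ω / c.piS s - c.psiTilt Ψ s ω ⬝ᵥ c.effCoef s t b := by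
  have hs : c.S ω = s := hω
  have hp := (c.piS_pos hc s).ne'
  simp only [Xi1, c.tilt_wm_linWM_of_mem Ψ hc hΨ hω]
  simp only [tilt, cES, hs, W, ctrOutcome, effCoef, dotProduct_add, dotProduct_smul,
    dotProduct_sub, smul_eq_mul]
  field_simp
  ring

lemma Xi0_linWM_of_mem [MeasurableSingletonClass 𝒮] (hc : c.PopAssumptions)
    (hΨ : c.PsiRegular Ψ) {s : 𝒮} {ω : Ω} (hω : ω ∈ c.stratum s) (t b : Bool → 𝒮 → ι → ℝ) :
    c.Xi0 (linWM Ψ t) (linWM Ψ b) ω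
      = -c.ctrOutcome s false ω / (1 - c.piS s)
        + c.piS s / (1 - c.piS s) * c.psiTilt Ψ s ω ⬝ᵥ c.effCoef s t b := by
  have hs : c.S ω = s := hω
  have hp := (c.piS_pos hc s).ne'
  have hp' : 1 - c.piS s ≠ 0 := (sub_pos.2 (c.piS_lt_one hc s)).ne'
  simp only [Xi0, c.tilt_wm_linWM_of_mem Ψ hc hΨ hω]
  simp only [tilt, cES, hs, Z, ctrOutcome, effCoef, dotProduct_add, dotProduct_smul,
    dotProduct_sub, smul_eq_mul]
  field_simp
  ring

lemma sigma1Sq_add_sigma0Sq_linWM [Fintype 𝒮] [MeasurableSingletonClass 𝒮]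
    (hc : c.PopAssumptions) (hΨ : c.PsiRegular Ψ) (t b : Bool → 𝒮 → ι → ℝ) :
    c.sigma1Sq (linWM Ψ t) (linWM Ψ b) + c.sigma0Sq (linWM Ψ t) (linWM Ψ b)
      = ∑ s, ∫ ω in c.stratum s, stratumLoss (c.piS s) (c.ctrOutcome s true ω)
          (c.ctrOutcome s false ω) (c.psiTilt Ψ s ω ⬝ᵥ c.effCoef s t b) ∂c.P := by
  have hg (s : 𝒮) := memLp_dotProduct (c.memLp_psiTilt Ψ hc hΨ s) (c.effCoef s t b)
  have hint1 (s : 𝒮) : Integrable (fun ω => c.piS s * (c.ctrOutcome s true ω / c.piS s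
      - c.psiTilt Ψ s ω ⬝ᵥ c.effCoef s t b) ^ 2) (c.P.restrict (c.stratum s)) :=
    (((c.memLp_ctrOutcome hc s true).mul_const _).sub (hg s)).integrable_sq.const_mul _
  have hint0 (s : 𝒮) : Integrable (fun ω => (1 - c.piS s) * (-c.ctrOutcome s false ω
      / (1 - c.piS s) + c.piS s / (1 - c.piS s) * c.psiTilt Ψ s ω ⬝ᵥ c.effCoef s t b) ^ 2)
      (c.P.restrict (c.stratum s)) :=
    ((((c.memLp_ctrOutcome hc s false).neg.mul_const _)).add
      ((hg s).const_mul _)).integrable_sq.const_mul _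
  rw [sigma1Sq, sigma0Sq,
    c.integral_eq_sum_setIntegral_stratum hc (fun s ω (hω : c.S ω = s) => by
      simp only [c.Xi1_linWM_of_mem Ψ hc hΨ hω, hω]) hint1,
    c.integral_eq_sum_setIntegral_stratum hc (fun s ω (hω : c.S ω = s) => by
      simp only [c.Xi0_linWM_of_mem Ψ hc hΨ hω, hω]) hint0,
    ← Finset.sum_add_distrib]
  exact Finset.sum_congr rfl fun s _ => (integral_add (hint1 s) (hint0 s)).symm

lemma setIntegral_stratumLoss (hc : c.PopAssumptions) (hΨ : c.PsiRegular Ψ) (s : 𝒮)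
    (v : ι → ℝ) :
    ∫ ω in c.stratum s, stratumLoss (c.piS s) (c.ctrOutcome s true ω) (c.ctrOutcome s false ω)
        (c.psiTilt Ψ s ω ⬝ᵥ v) ∂c.P
      = c.piS s / (1 - c.piS s) * ∫ ω in c.stratum s, (c.target s ω - c.psiTilt Ψ s ω ⬝ᵥ v) ^ 2 ∂c.P
        + ∫ ω in c.stratum s, stratumLoss (c.piS s) (c.ctrOutcome s true ω)
            (c.ctrOutcome s false ω) (c.target s ω) ∂c.P := by
  have hp := (c.piS_pos hc s).ne'
  have hp' : 1 - c.piS s ≠ 0 := (sub_pos.2 (c.piS_lt_one hc s)).ne'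
  have hA := c.memLp_ctrOutcome hc s true
  have hB := c.memLp_ctrOutcome hc s false
  have hR := c.memLp_target hc s
  have hsq : Integrable (fun ω => (c.target s ω - c.psiTilt Ψ s ω ⬝ᵥ v) ^ 2)
      (c.P.restrict (c.stratum s)) :=
    (hR.sub (memLp_dotProduct (c.memLp_psiTilt Ψ hc hΨ s) v)).integrable_sq
  have hloss : Integrable (fun ω => stratumLoss (c.piS s) (c.ctrOutcome s true ω)
      (c.ctrOutcome s false ω) (c.target s ω)) (c.P.restrict (c.stratum s)) :=
    (((hA.mul_const _).sub hR).integrable_sq.const_mul _).add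
      (((hB.neg.mul_const _).add (hR.const_mul _)).integrable_sq.const_mul _)
  rw [← integral_const_mul, ← integral_add (hsq.const_mul _) hloss]
  exact integral_congr_ae (ae_of_all _ fun ω => stratumLoss_eq hp hp' _ _ _)

lemma setIntegral_psiTilt_mul_dotProduct (hc : c.PopAssumptions) (hΨ : c.PsiRegular Ψ)
    (s : 𝒮) (j : ι) (v : ι → ℝ) :
    ∫ ω in c.stratum s, c.psiTilt Ψ s ω j * c.psiTilt Ψ s ω ⬝ᵥ v ∂c.P
      = (c.P (c.stratum s)).toReal * (c.gram Ψ s *ᵥ v) j := by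
  have hexp (ω : Ω) : c.psiTilt Ψ s ω j * c.psiTilt Ψ s ω ⬝ᵥ v
      = ∑ i, c.psiTilt Ψ s ω j * c.psiTilt Ψ s ω i * v i := by
    simp only [dotProduct, Finset.mul_sum, mul_assoc]
  simp_rw [hexp]
  rw [integral_finsetSum (f := fun i ω => c.psiTilt Ψ s ω j * c.psiTilt Ψ s ω i * v i) _
    fun i _ => ((c.memLp_psiTilt Ψ hc hΨ s j).integrable_mul
    (c.memLp_psiTilt Ψ hc hΨ s i)).mul_const _, Matrix.mulVec, dotProduct, Finset.mul_sum]
  refine Finset.sum_congr rfl fun i _ => ?_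
  rw [integral_mul_const, c.setIntegral_stratum_eq_mul_cEs hc, mul_assoc]
  rfl

lemma setIntegral_psiTilt_mul_ctrOutcome (hc : c.PopAssumptions) (hΨ : c.PsiRegular Ψ)
    (s : 𝒮) (a : Bool) (j : ι) :
    ∫ ω in c.stratum s, c.psiTilt Ψ s ω j * c.ctrOutcome s a ω ∂c.P
      = (c.P (c.stratum s)).toReal
        * (c.crossMoment Ψ s (c.Ya a) j - c.tau * c.crossMoment Ψ s (c.Da a) j) := by
  have := hc.prob
  have hψ := c.memLp_psiTilt Ψ hc hΨ s j
  have hY : Integrable (fun ω => c.psiTilt Ψ s ω j * c.Ya a ω) (c.P.restrict (c.stratum s)) :=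
    hψ.integrable_mul ((c.memLp_Ya hc a).restrict _)
  have hD : Integrable (fun ω => c.tau * (c.psiTilt Ψ s ω j * c.Da a ω))
      (c.P.restrict (c.stratum s)) :=
    (hψ.integrable_mul ((c.memLp_Da hc a).restrict _)).const_mul _
  have hexp (ω : Ω) : c.psiTilt Ψ s ω j * c.ctrOutcome s a ω
      = (c.psiTilt Ψ s ω j * c.Ya a ω - c.tau * (c.psiTilt Ψ s ω j * c.Da a ω))
        - (c.cEs s (c.Ya a) - c.tau * c.cEs s (c.Da a)) * c.psiTilt Ψ s ω j := by
    simp only [ctrOutcome]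
    ring
  have hYD : Integrable (fun ω => c.psiTilt Ψ s ω j * c.Ya a ω
      - c.tau * (c.psiTilt Ψ s ω j * c.Da a ω)) (c.P.restrict (c.stratum s)) := hY.sub hD
  simp_rw [hexp]
  rw [integral_sub hYD ((hψ.integrable one_le_two).const_mul _), integral_sub hY hD,
    integral_const_mul, integral_const_mul, c.setIntegral_psiTilt Ψ hc hΨ,
    c.setIntegral_stratum_eq_mul_cEs hc, c.setIntegral_stratum_eq_mul_cEs hc]
  simp only [crossMoment]
  ring

lemma gram_mulVec_effCoef_thetaL_betaL [DecidableEq ι] (hΨ : c.PsiRegular Ψ) (s : 𝒮) :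
    c.gram Ψ s *ᵥ c.effCoef s (c.thetaL Ψ) (c.betaL Ψ)
      = ((1 - c.piS s) / c.piS s)
          • (c.crossMoment Ψ s (c.Ya true) - c.tau • c.crossMoment Ψ s (c.Da true))
        + (c.crossMoment Ψ s (c.Ya false) - c.tau • c.crossMoment Ψ s (c.Da false)) := by
  simp only [effCoef, Matrix.mulVec_add, Matrix.mulVec_smul, Matrix.mulVec_sub, thetaL, betaL,
    c.gram_mulVec_inv_mulVec Ψ hΨ]
  rfl

lemma setIntegral_psiTilt_mul_target_sub [DecidableEq ι] (hc : c.PopAssumptions)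
    (hΨ : c.PsiRegular Ψ) (s : 𝒮) (j : ι) :
    ∫ ω in c.stratum s, c.psiTilt Ψ s ω j
        * (c.target s ω - c.psiTilt Ψ s ω ⬝ᵥ c.effCoef s (c.thetaL Ψ) (c.betaL Ψ)) ∂c.P = 0 := by
  have hψ := c.memLp_psiTilt Ψ hc hΨ s j
  have hA (a : Bool) : Integrable (fun ω => c.psiTilt Ψ s ω j * c.ctrOutcome s a ω)
      (c.P.restrict (c.stratum s)) :=
    hψ.integrable_mul (c.memLp_ctrOutcome hc s a)
  have hg : Integrable (fun ω => c.psiTilt Ψ s ω j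
      * c.psiTilt Ψ s ω ⬝ᵥ c.effCoef s (c.thetaL Ψ) (c.betaL Ψ)) (c.P.restrict (c.stratum s)) :=
    hψ.integrable_mul (memLp_dotProduct (c.memLp_psiTilt Ψ hc hΨ s) _)
  have hexp (ω : Ω) : c.psiTilt Ψ s ω j
        * (c.target s ω - c.psiTilt Ψ s ω ⬝ᵥ c.effCoef s (c.thetaL Ψ) (c.betaL Ψ))
      = ((1 - c.piS s) / c.piS s * (c.psiTilt Ψ s ω j * c.ctrOutcome s true ω)
          + c.psiTilt Ψ s ω j * c.ctrOutcome s false ω)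
        - c.psiTilt Ψ s ω j * c.psiTilt Ψ s ω ⬝ᵥ c.effCoef s (c.thetaL Ψ) (c.betaL Ψ) := by
    simp only [target]
    ring
  have hA' : Integrable (fun ω => (1 - c.piS s) / c.piS s
      * (c.psiTilt Ψ s ω j * c.ctrOutcome s true ω) + c.psiTilt Ψ s ω j * c.ctrOutcome s false ω)
      (c.P.restrict (c.stratum s)) := ((hA true).const_mul _).add (hA false)
  simp_rw [hexp]
  rw [integral_sub hA' hg,
    integral_add ((hA true).const_mul _) (hA false), integral_const_mul,
    c.setIntegral_psiTilt_mul_ctrOutcome Ψ hc hΨ, c.setIntegral_psiTilt_mul_ctrOutcome Ψ hc hΨ,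
    c.setIntegral_psiTilt_mul_dotProduct Ψ hc hΨ, c.gram_mulVec_effCoef_thetaL_betaL Ψ hΨ]
  simp only [Pi.add_apply, Pi.smul_apply, Pi.sub_apply, smul_eq_mul]
  ring

theorem sigma1Sq_add_sigma0Sq_linWM_thetaL_betaL_le [Fintype 𝒮] [MeasurableSingletonClass 𝒮]
    [DecidableEq ι] (hc : c.PopAssumptions) (hΨ : c.PsiRegular Ψ) (t b : Bool → 𝒮 → ι → ℝ) :
    c.sigma1Sq (linWM Ψ (c.thetaL Ψ)) (linWM Ψ (c.betaL Ψ))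
        + c.sigma0Sq (linWM Ψ (c.thetaL Ψ)) (linWM Ψ (c.betaL Ψ))
      ≤ c.sigma1Sq (linWM Ψ t) (linWM Ψ b) + c.sigma0Sq (linWM Ψ t) (linWM Ψ b) := by
  rw [c.sigma1Sq_add_sigma0Sq_linWM Ψ hc hΨ, c.sigma1Sq_add_sigma0Sq_linWM Ψ hc hΨ]
  refine Finset.sum_le_sum fun s _ => ?_
  rw [c.setIntegral_stratumLoss Ψ hc hΨ, c.setIntegral_stratumLoss Ψ hc hΨ]
  have hweight : 0 ≤ c.piS s / (1 - c.piS s) :=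
    div_nonneg (c.piS_pos hc s).le (sub_pos.2 (c.piS_lt_one hc s)).le
  exact add_le_add_left (mul_le_mul_of_nonneg_left (integral_sq_sub_dotProduct_le
    (c.memLp_target hc s) (c.memLp_psiTilt Ψ hc hΨ s)
    (c.setIntegral_psiTilt_mul_target_sub Ψ hc hΨ s) _) hweight) _

end LinearAdjustment

end CARPop

open CARPop in
/-- The optimal linear adjustment `(θᴸ, βᴸ)` yields a weakly smaller
asymptotic variance than any other linear adjustment coefficients `(t, b)`; in particular,
taking `t = b = 0`, it is weakly more efficient than the unadjusted (fully saturated)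
estimator. -/
theorem stmt4 {Ω : Type*} [MeasurableSpace Ω] {𝒮 : Type*} [Fintype 𝒮] [MeasurableSpace 𝒮]
    [MeasurableSingletonClass 𝒮] {d k : ℕ}
    (c : CARPop Ω 𝒮 d) (hc : PopAssumptions c)
    (Ψ : 𝒮 → (Fin d → ℝ) → Fin k → ℝ) (hΨ : c.PsiRegular Ψ) :
    (∀ t b : Bool → 𝒮 → Fin k → ℝ,
      c.sigmaSqLin Ψ (c.thetaL Ψ) (c.betaL Ψ) ≤ c.sigmaSqLin Ψ t b) ∧
    c.sigmaSqLin Ψ (c.thetaL Ψ) (c.betaL Ψ) ≤ c.sigmaSqLin Ψ 0 0 := by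
  have hoptimal (t b : Bool → 𝒮 → Fin k → ℝ) :
      c.sigmaSqLin Ψ (c.thetaL Ψ) (c.betaL Ψ) ≤ c.sigmaSqLin Ψ t b :=
    div_le_div_of_nonneg_right
      (add_le_add_left (c.sigma1Sq_add_sigma0Sq_linWM_thetaL_betaL_le Ψ hc hΨ t b) _)
      (sq_nonneg _)
  exact ⟨hoptimal, hoptimal 0 0⟩
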